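/- arXiv:1812.09185 — 3 statements merged into one kernel-verified Lean document; each statement's English description precedes it below -/
import Mathlib

section
/- Let E and F be reflexive Banach spaces over ℝ, let L : E → F' (the continuous dual of F) be a continuous linear operator, let D ⊆ F be a dense subspace, and let L* : F → E' be the adjoint of L, defined by (L*v)(u) = (Lu)(v) for u ∈ E, v ∈ F. If there exists γ > 0 such that ‖L*v‖_{E'} ≥ γ‖v‖_F for all v ∈ D, then for every f ∈ F' there exists u ∈ E with Lu = f and ‖u‖_E ≤ γ⁻¹ ‖f‖_{F'}. -/
open NormedSpace

/-!
By density the lower bound `γ‖v‖ ≤ ‖L* v‖` holds on all of `F`, so `L*` is injective and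
`L* v ↦ f v` is a functional of norm at most `γ⁻¹‖f‖` on the range of `L*`. Hahn–Banach extends
it to some `g ∈ E''` of the same norm, and reflexivity of `E` writes `g` as evaluation at some
`u ∈ E`; then `(L u) v = (L* v) u = g (L* v) = f v`.
-/

theorem ContinuousLinearMap.exists_dual_comp_eq_of_bounded_below {𝕜 F G : Type*} [RCLike 𝕜]
    [NormedAddCommGroup F] [NormedSpace 𝕜 F] [NormedAddCommGroup G] [NormedSpace 𝕜 G]
    (T : F →L[𝕜] G) {γ : ℝ} (hγ : 0 < γ) (hT : ∀ v, γ * ‖v‖ ≤ ‖T v‖) (f : StrongDual 𝕜 F) :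
    ∃ g : StrongDual 𝕜 G, g.comp T = f ∧ ‖g‖ ≤ γ⁻¹ * ‖f‖ := by
  have hinj : Function.Injective T := by
    refine (injective_iff_map_eq_zero T).mpr fun v hv => norm_le_zero_iff.mp ?_
    have := hT v
    rw [hv, norm_zero] at this
    nlinarith [norm_nonneg v]
  let e := LinearEquiv.ofInjective (T : F →ₗ[𝕜] G) hinj
  let φ : LinearMap.range (T : F →ₗ[𝕜] G) →ₗ[𝕜] 𝕜 := (f : F →ₗ[𝕜] 𝕜) ∘ₗ e.symm.toLinearMap
  have hbound : ∀ x, ‖φ x‖ ≤ γ⁻¹ * ‖f‖ * ‖x‖ := fun x => calc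
    ‖φ x‖ ≤ ‖f‖ * ‖e.symm x‖ := f.le_opNorm _
    _ ≤ ‖f‖ * (γ⁻¹ * ‖T (e.symm x)‖) := by
      gcongr
      exact (le_inv_mul_iff₀ hγ).mpr (hT _)
    _ = γ⁻¹ * ‖f‖ * ‖x‖ := by
      rw [show T (e.symm x) = x from LinearEquiv.ofInjective_symm_apply (f := (T : F →ₗ[𝕜] G)) x,
        Submodule.coe_norm]
      ring
  obtain ⟨g, hg, hg_norm⟩ := exists_extension_norm_eq _ (φ.mkContinuous _ hbound)
  refine ⟨g, ?_, hg_norm ▸ ContinuousLinearMap.opNorm_le_bound _ (by positivity) hbound⟩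
  ext v
  simpa [φ, e] using hg (e v)

theorem stmt0_general
    (E F : Type*) [NormedAddCommGroup E] [NormedSpace ℝ E]
    [NormedAddCommGroup F] [NormedSpace ℝ F]
    (hErefl : Function.Surjective (inclusionInDoubleDual ℝ E))
    (L : E →L[ℝ] StrongDual ℝ F)
    (Lstar : F →L[ℝ] StrongDual ℝ E)
    (hLstar : ∀ (u : E) (v : F), Lstar v u = L u v)
    (D : Submodule ℝ F) (hD : Dense (D : Set F))
    (γ : ℝ) (hγ : 0 < γ)
    (hcoer : ∀ v ∈ D, γ * ‖v‖ ≤ ‖Lstar v‖) :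
    ∀ f : StrongDual ℝ F, ∃ u : E, L u = f ∧ ‖u‖ ≤ γ⁻¹ * ‖f‖ := by
  intro f
  have hbelow : ∀ v, γ * ‖v‖ ≤ ‖Lstar v‖ :=
    hD.induction hcoer (isClosed_le (by fun_prop) (by fun_prop))
  obtain ⟨g, hgf, hg⟩ := Lstar.exists_dual_comp_eq_of_bounded_below hγ hbelow f
  obtain ⟨u, rfl⟩ := hErefl g
  refine ⟨u, ?_, ?_⟩
  · ext v
    rw [← hLstar, ← hgf]
    rfl
  · exact ((inclusionInDoubleDualLi ℝ).norm_map u).symm.trans_le hg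

/-- **Lions–Lax–Milgram type duality lemma.**
Let `E` and `F` be reflexive Banach spaces over `ℝ` (reflexivity being expressed as
surjectivity of the canonical inclusion into the double dual), `L : E →L[ℝ] F'` a
continuous linear operator, `D ⊆ F` a dense subspace, and `Lstar : F →L[ℝ] E'` the
adjoint of `L`, i.e. `(Lstar v) u = (L u) v`.  If there is `γ > 0` with
`γ‖v‖ ≤ ‖Lstar v‖` for all `v ∈ D`, then for every `f ∈ F'` there exists `u ∈ E`
with `L u = f` and `‖u‖ ≤ γ⁻¹ ‖f‖`. -/
theorem stmt0
    (E F : Type*) [NormedAddCommGroup E] [NormedSpace ℝ E] [CompleteSpace E]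
    [NormedAddCommGroup F] [NormedSpace ℝ F] [CompleteSpace F]
    (hErefl : Function.Surjective (inclusionInDoubleDual ℝ E))
    (hFrefl : Function.Surjective (inclusionInDoubleDual ℝ F))
    (L : E →L[ℝ] StrongDual ℝ F)
    (Lstar : F →L[ℝ] StrongDual ℝ E)
    (hLstar : ∀ (u : E) (v : F), Lstar v u = L u v)
    (D : Submodule ℝ F) (hD : Dense (D : Set F))
    (γ : ℝ) (hγ : 0 < γ)
    (hcoer : ∀ v ∈ D, γ * ‖v‖ ≤ ‖Lstar v‖) :
    ∀ f : StrongDual ℝ F, ∃ u : E, L u = f ∧ ‖u‖ ≤ γ⁻¹ * ‖f‖ :=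
  stmt0_general E F hErefl L Lstar hLstar D hD γ hγ hcoer
end

section
/- There exists a constant C > 0 such that for every pair ϖ = (w, φ) with w smooth and compactly supported in (0,∞) × [0,∞) and φ smooth and compactly supported in (0,∞) × (0,∞), one has ∫_Ω [ −φ(∂_z w + z ∂_y w) − (1/2)|∂_y²φ|² ] dy dz + ∫_Ω [ −w(∂_z φ + z ∂_y φ) − (1/2)|∂_y w|² ] dy dz ≤ −C ‖ϖ‖²_{E00}. -/
open MeasureTheory Set

noncomputable section

namespace Stmt2Aux

/-- slice in first variable has derivative fderiv applied to (1,0) -/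
lemma hasDerivAt_slice1 {F : ℝ × ℝ → ℝ} (hF : Differentiable ℝ F) (y z : ℝ) :
    HasDerivAt (fun t => F (t, z)) (fderiv ℝ F (y, z) (1, 0)) y :=
  (hF (y, z)).hasFDerivAt.comp_hasDerivAt y ((hasDerivAt_id y).prodMk (hasDerivAt_const y z))

lemma hasDerivAt_slice2 {F : ℝ × ℝ → ℝ} (hF : Differentiable ℝ F) (y z : ℝ) :
    HasDerivAt (fun t => F (y, t)) (fderiv ℝ F (y, z) (0, 1)) z :=
  (hF (y, z)).hasFDerivAt.comp_hasDerivAt z ((hasDerivAt_const z y).prodMk (hasDerivAt_id z))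

lemma deriv_slice1 {F : ℝ × ℝ → ℝ} (hF : Differentiable ℝ F) (y z : ℝ) :
    deriv (fun t => F (t, z)) y = fderiv ℝ F (y, z) (1, 0) :=
  (hasDerivAt_slice1 hF y z).deriv

lemma deriv_slice2 {F : ℝ × ℝ → ℝ} (hF : Differentiable ℝ F) (y z : ℝ) :
    deriv (fun t => F (y, t)) z = fderiv ℝ F (y, z) (0, 1) :=
  (hasDerivAt_slice2 hF y z).deriv

/-- the partial derivative as a 2D function is smooth -/
lemma contDiff_pderiv {F : ℝ × ℝ → ℝ} (hF : ContDiff ℝ (⊤ : ℕ∞) F) (v : ℝ × ℝ) :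
    ContDiff ℝ (⊤ : ℕ∞) (fun p => fderiv ℝ F p v) :=
  (ContinuousLinearMap.apply ℝ ℝ v).contDiff.comp (hF.fderiv_right (le_of_eq rfl))

lemma support_pderiv_subset {F : ℝ × ℝ → ℝ} (v : ℝ × ℝ) :
    Function.support (fun p => fderiv ℝ F p v) ⊆ tsupport F := by
  intro p hp
  apply tsupport_fderiv_subset ℝ (f := F)
  apply subset_closure
  intro h0
  exact hp (by simp [Function.mem_support, h0])

lemma hcs_pderiv {F : ℝ × ℝ → ℝ} (hs : HasCompactSupport F) (v : ℝ × ℝ) :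
    HasCompactSupport (fun p => fderiv ℝ F p v) :=
  hs.fderiv_apply ℝ v

end Stmt2Aux

namespace Stmt2Aux

/-- compact support of first slices -/
lemma hcs_slice1 {F : ℝ × ℝ → ℝ} (hs : HasCompactSupport F) (z : ℝ) :
    HasCompactSupport (fun y => F (y, z)) := by
  apply IsCompact.of_isClosed_subset (hs.image continuous_fst) (isClosed_tsupport _)
  apply closure_minimal _ (hs.image continuous_fst).isClosed
  intro y hy
  exact ⟨(y, z), subset_closure hy, rfl⟩

lemma hcs_slice2 {F : ℝ × ℝ → ℝ} (hs : HasCompactSupport F) (y : ℝ) :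
    HasCompactSupport (fun z => F (y, z)) := by
  apply IsCompact.of_isClosed_subset (hs.image continuous_snd) (isClosed_tsupport _)
  apply closure_minimal _ (hs.image continuous_snd).isClosed
  intro z hz
  exact ⟨(y, z), subset_closure hz, rfl⟩

lemma tsupport_slice1 {F : ℝ × ℝ → ℝ} (z : ℝ) :
    tsupport (fun y => F (y, z)) ⊆ {y | (y, z) ∈ tsupport F} := by
  apply closure_minimal
  · intro y hy; exact subset_closure hy
  · exact (isClosed_tsupport F).preimage (Continuous.prodMk_left z)

lemma tsupport_slice2 {F : ℝ × ℝ → ℝ} (y : ℝ) :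
    tsupport (fun z => F (y, z)) ⊆ {z | (y, z) ∈ tsupport F} := by
  apply closure_minimal
  · intro z hz; exact subset_closure hz
  · exact (isClosed_tsupport F).preimage (Continuous.prodMk_right y)

lemma contDiff_slice1 {F : ℝ × ℝ → ℝ} (hF : ContDiff ℝ (⊤ : ℕ∞) F) (z : ℝ) :
    ContDiff ℝ (⊤ : ℕ∞) (fun y => F (y, z)) :=
  hF.comp (contDiff_id.prodMk contDiff_const)

lemma contDiff_slice2 {F : ℝ × ℝ → ℝ} (hF : ContDiff ℝ (⊤ : ℕ∞) F) (y : ℝ) :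
    ContDiff ℝ (⊤ : ℕ∞) (fun z => F (y, z)) :=
  hF.comp (contDiff_const.prodMk contDiff_id)

/-- Fubini over the quadrant, inner integral in the second variable. -/
lemma fubini1 {F : ℝ × ℝ → ℝ} (hF : Continuous F) (hs : HasCompactSupport F) :
    ∫ p in Ioi (0:ℝ) ×ˢ Ioi (0:ℝ), F p = ∫ y in Ioi (0:ℝ), ∫ z in Ioi (0:ℝ), F (y, z) := by
  have h : Integrable F (((volume : Measure ℝ).restrict (Ioi 0)).prod
      ((volume : Measure ℝ).restrict (Ioi 0))) := by
    rw [Measure.prod_restrict, ← Measure.volume_eq_prod]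
    exact (hF.integrable_of_hasCompactSupport hs).restrict
  have h2 := MeasureTheory.integral_prod F h
  rwa [Measure.prod_restrict, ← Measure.volume_eq_prod] at h2

/-- Fubini over the quadrant, inner integral in the first variable. -/
lemma fubini2 {F : ℝ × ℝ → ℝ} (hF : Continuous F) (hs : HasCompactSupport F) :
    ∫ p in Ioi (0:ℝ) ×ˢ Ioi (0:ℝ), F p = ∫ z in Ioi (0:ℝ), ∫ y in Ioi (0:ℝ), F (y, z) := by
  have h : Integrable F (((volume : Measure ℝ).restrict (Ioi 0)).prod
      ((volume : Measure ℝ).restrict (Ioi 0))) := by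
    rw [Measure.prod_restrict, ← Measure.volume_eq_prod]
    exact (hF.integrable_of_hasCompactSupport hs).restrict
  have h2 := MeasureTheory.integral_prod_symm F h
  rwa [Measure.prod_restrict, ← Measure.volume_eq_prod] at h2

/-- integral of the derivative of a compactly supported function vanishing at 0 -/
lemma int_deriv_zero {g : ℝ → ℝ} (hg : ContDiff ℝ 1 g) (hc : HasCompactSupport g)
    (h0 : g 0 = 0) : ∫ x in Ioi (0:ℝ), deriv g x = 0 := by
  rw [hc.integral_Ioi_deriv_eq hg 0, h0, neg_zero]

end Stmt2Aux

namespace Stmt2Aux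

/-- 1D: `g/y^n` is continuous when `g` is supported in `(0,∞)`. -/
lemma cont_div_pow {g : ℝ → ℝ} (hg : Continuous g) (hs : tsupport g ⊆ Ioi 0) (n : ℕ) :
    Continuous (fun y => g y / y ^ n) := by
  rw [continuous_iff_continuousAt]
  intro y
  by_cases hy : y ∈ tsupport g
  · exact (hg.continuousAt).div (continuousAt_pow _ _) (pow_ne_zero n (ne_of_gt (hs hy)))
  · have hev : ∀ᶠ x in nhds y, g x / x ^ n = 0 := by
      filter_upwards [(isClosed_tsupport g).isOpen_compl.mem_nhds hy] with x hx
      rw [image_eq_zero_of_notMem_tsupport hx, zero_div]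
    exact (continuousAt_const (y := 0)).congr (hev.mono fun x hx => hx.symm)

/-- 2D: `F p / p.1 ^ n` is continuous when `F` is supported in `{p | 0 < p.1}`. -/
lemma cont2_div_pow {F : ℝ × ℝ → ℝ} (hF : Continuous F)
    (hs : ∀ p ∈ tsupport F, 0 < p.1) (n : ℕ) :
    Continuous (fun p : ℝ × ℝ => F p / p.1 ^ n) := by
  rw [continuous_iff_continuousAt]
  intro p
  by_cases hp : p ∈ tsupport F
  · exact (hF.continuousAt).div ((continuous_pow n).comp continuous_fst).continuousAt
      (pow_ne_zero n (ne_of_gt (hs p hp)))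
  · have hev : ∀ᶠ q in nhds p, F q / q.1 ^ n = 0 := by
      filter_upwards [(isClosed_tsupport F).isOpen_compl.mem_nhds hp] with q hq
      rw [image_eq_zero_of_notMem_tsupport hq, zero_div]
    exact (continuousAt_const (y := 0)).congr (hev.mono fun x hx => hx.symm)

lemma hcs_div_pow {g : ℝ → ℝ} (hc : HasCompactSupport g) (n : ℕ) :
    HasCompactSupport (fun y => g y / y ^ n) :=
  hc.mono (fun y hy => by
    intro h0; apply hy; simp only [h0, zero_div])

lemma hcs2_div_pow {F : ℝ × ℝ → ℝ} (hc : HasCompactSupport F) (n : ℕ) :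
    HasCompactSupport (fun p : ℝ × ℝ => F p / p.1 ^ n) :=
  hc.mono (fun p hp => by
    intro h0; apply hp; simp only [h0, zero_div])

end Stmt2Aux

namespace Stmt2Aux

variable {F : ℝ × ℝ → ℝ}

/-- divergence theorem in the second variable -/
lemma div2_zero (hF : ContDiff ℝ (⊤ : ℕ∞) F) (hc : HasCompactSupport F)
    (hsub : tsupport F ⊆ Ioi 0 ×ˢ Ioi 0) :
    ∫ p in Ioi (0:ℝ) ×ˢ Ioi (0:ℝ), deriv (fun t => F (p.1, t)) p.2 = 0 := by
  have hD : Differentiable ℝ F := hF.differentiable (by simp)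
  have key : (fun p : ℝ × ℝ => deriv (fun t => F (p.1, t)) p.2)
      = fun p : ℝ × ℝ => fderiv ℝ F p (0, 1) := funext fun p => deriv_slice2 hD p.1 p.2
  rw [key, fubini1 (contDiff_pderiv hF _).continuous (hcs_pderiv hc _)]
  have inner : ∀ y : ℝ, (∫ z in Ioi (0:ℝ), fderiv ℝ F (y, z) (0, 1)) = 0 := by
    intro y
    have e : (fun z => fderiv ℝ F (y, z) (0, 1)) = deriv (fun t => F (y, t)) :=
      funext fun z => (deriv_slice2 hD y z).symm
    rw [e]
    apply int_deriv_zero ((contDiff_slice2 hF y).of_le (by exact_mod_cast le_top)) (hcs_slice2 hc y)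
    apply image_eq_zero_of_notMem_tsupport
    intro hmem
    exact lt_irrefl (0:ℝ) (hsub hmem).2
  simp [inner]

/-- divergence theorem in the first variable, with weight `z` -/
lemma div1_zero (hF : ContDiff ℝ (⊤ : ℕ∞) F) (hc : HasCompactSupport F)
    (hsub : tsupport F ⊆ Ioi 0 ×ˢ Ioi 0) :
    ∫ p in Ioi (0:ℝ) ×ˢ Ioi (0:ℝ), p.2 * deriv (fun t => F (t, p.2)) p.1 = 0 := by
  have hD : Differentiable ℝ F := hF.differentiable (by simp)
  have key : (fun p : ℝ × ℝ => p.2 * deriv (fun t => F (t, p.2)) p.1)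
      = fun p : ℝ × ℝ => p.2 * fderiv ℝ F p (1, 0) :=
    funext fun p => by rw [deriv_slice1 hD p.1 p.2]
  have hcs : HasCompactSupport (fun p : ℝ × ℝ => p.2 * fderiv ℝ F p (1, 0)) := by
    apply (hcs_pderiv hc ((1:ℝ), (0:ℝ))).mono
    intro p hp h0
    apply hp; simp only [h0, mul_zero]
  rw [key, fubini2 (F := fun p : ℝ × ℝ => p.2 * fderiv ℝ F p (1, 0)) (continuous_snd.mul (contDiff_pderiv hF _).continuous) hcs]
  have inner : ∀ z : ℝ, (∫ y in Ioi (0:ℝ), z * fderiv ℝ F (y, z) (1, 0)) = 0 := by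
    intro z
    rw [MeasureTheory.integral_const_mul]
    have e : (fun y => fderiv ℝ F (y, z) (1, 0)) = deriv (fun t => F (t, z)) :=
      funext fun y => (deriv_slice1 hD y z).symm
    rw [e]
    rw [int_deriv_zero ((contDiff_slice1 hF z).of_le (by exact_mod_cast le_top)) (hcs_slice1 hc z) ?_, mul_zero]
    apply image_eq_zero_of_notMem_tsupport
    intro hmem
    exact lt_irrefl (0:ℝ) (hsub hmem).1
  simp [inner]

end Stmt2Aux

namespace Stmt2Aux

/-- One step of the weighted Hardy inequality on `(0,∞)`. -/
lemma hardy_step (n : ℕ) {g : ℝ → ℝ} (hg : ContDiff ℝ (⊤ : ℕ∞) g)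
    (hc : HasCompactSupport g) (hs : tsupport g ⊆ Ioi 0) :
    ∫ y in Ioi (0:ℝ), (g y / y ^ (n+1)) ^ 2
      ≤ (4 / (2*(n:ℝ)+1)^2) * ∫ y in Ioi (0:ℝ), (deriv g y / y ^ n) ^ 2 := by
  set k : ℕ := 2*n+1 with hk
  have hkR : ((k : ℝ)) = 2*(n:ℝ)+1 := by push_cast [hk]; ring
  have hkpos : (0:ℝ) < (k : ℝ) := by rw [hkR]; positivity
  set h : ℝ → ℝ := fun y => (-(g y)^2) / ((k : ℝ) * y ^ k) with hdef
  have hgc : Continuous g := hg.continuous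
  have hgd : Differentiable ℝ g := hg.differentiable (by simp)
  -- h is C¹
  have hC1 : ContDiff ℝ 1 h := by
    rw [contDiff_iff_contDiffAt]
    intro y
    by_cases hy : y ∈ tsupport g
    · have hy0 : (0:ℝ) < y := hs hy
      apply ContDiffAt.div
      · exact ((hg.of_le (by exact_mod_cast le_top)).contDiffAt.pow 2).neg
      · exact (contDiffAt_const.mul ((contDiffAt_id.pow k)))
      · positivity
    · have hev : h =ᶠ[nhds y] (fun _ => (0:ℝ)) := by
        filter_upwards [(isClosed_tsupport g).isOpen_compl.mem_nhds hy] with x hx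
        simp [hdef, image_eq_zero_of_notMem_tsupport hx]
      exact ContDiffAt.congr_of_eventuallyEq contDiffAt_const hev
  -- compact support
  have hCS : HasCompactSupport h := by
    apply hc.mono
    intro y hy h0
    apply hy; simp [hdef, h0]
  -- h 0 = 0
  have h0 : h 0 = 0 := by
    have : (0:ℝ) ^ k = 0 := zero_pow (by omega)
    simp [hdef, this]
  -- deriv h on (0,∞)
  have hE : ∀ y ∈ Ioi (0:ℝ), deriv h y
      = (g y / y ^ (n+1)) ^ 2 - (2/(k:ℝ)) * (g y / y ^ (n+1)) * (deriv g y / y ^ n) := by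
    intro y hy
    have hy0 : (0:ℝ) < y := hy
    have hne : (k : ℝ) * y ^ k ≠ 0 := by positivity
    have h1 : HasDerivAt (fun x => -(g x)^2) (-(2 * g y * deriv g y)) y := by
      have := ((hgd y).hasDerivAt.fun_pow 2).fun_neg
      refine this.congr_deriv ?_
      push_cast; ring
    have h2 : HasDerivAt (fun x : ℝ => (k : ℝ) * x ^ k) ((k:ℝ) * ((k:ℝ) * y ^ (k-1))) y :=
      (hasDerivAt_pow k y).const_mul _
    have hd := (h1.fun_div h2 hne).deriv
    have hk1 : k - 1 = 2*n := by omega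
    rw [hdef, hd, hk1]
    have hyne : y ≠ 0 := ne_of_gt hy0
    have hyn : y ^ n ≠ 0 := pow_ne_zero _ hyne
    have hkne : (k:ℝ) ≠ 0 := ne_of_gt hkpos
    have e1 : y ^ k = y ^ n * y ^ n * y := by rw [hk]; ring
    have e2 : y ^ (2*n) = y ^ n * y ^ n := by ring
    have e3 : y ^ (n+1) = y ^ n * y := by ring
    rw [e1, e2, e3]
    field_simp
    ring
  -- the integral identity
  have hint0 : ∫ y in Ioi (0:ℝ),
      ((g y / y ^ (n+1)) ^ 2 - (2/(k:ℝ)) * (g y / y ^ (n+1)) * (deriv g y / y ^ n)) = 0 := by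
    rw [show (∫ y in Ioi (0:ℝ),
        ((g y / y ^ (n+1)) ^ 2 - (2/(k:ℝ)) * (g y / y ^ (n+1)) * (deriv g y / y ^ n)))
        = ∫ y in Ioi (0:ℝ), deriv h y from
      setIntegral_congr_fun measurableSet_Ioi (fun y hy => (hE y hy).symm)]
    exact int_deriv_zero hC1 hCS h0
  -- integrability
  have hPc : Continuous (fun y => (g y / y ^ (n+1)) ^ 2) :=
    (cont_div_pow hgc hs (n+1)).pow 2
  have hPcs : HasCompactSupport (fun y => (g y / y ^ (n+1)) ^ 2) :=
    (hcs_div_pow hc (n+1)).mono (fun y hy h0 => hy (by simp at h0 ⊢; simp [h0]))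
  have hP : IntegrableOn (fun y => (g y / y ^ (n+1)) ^ 2) (Ioi (0:ℝ)) :=
    (hPc.integrable_of_hasCompactSupport hPcs).integrableOn
  have hts' : tsupport (deriv g) ⊆ Ioi 0 :=
    (closure_minimal support_deriv_subset (isClosed_tsupport g)).trans hs
  have hQc : Continuous (fun y => (deriv g y / y ^ n) ^ 2) :=
    (cont_div_pow (hg.continuous_deriv (by exact_mod_cast le_top)) hts' n).pow 2
  have hQcs : HasCompactSupport (fun y => (deriv g y / y ^ n) ^ 2) :=
    (hcs_div_pow hc.deriv n).mono (fun y hy h0 => hy (by simp at h0 ⊢; simp [h0]))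
  have hQ : IntegrableOn (fun y => (deriv g y / y ^ n) ^ 2) (Ioi (0:ℝ)) :=
    (hQc.integrable_of_hasCompactSupport hQcs).integrableOn
  have hMc : Continuous (fun y => (2/(k:ℝ)) * (g y / y ^ (n+1)) * (deriv g y / y ^ n)) :=
    ((continuous_const.mul (cont_div_pow hgc hs (n+1))).mul
      (cont_div_pow (hg.continuous_deriv (by exact_mod_cast le_top)) hts' n))
  have hMcs : HasCompactSupport
      (fun y => (2/(k:ℝ)) * (g y / y ^ (n+1)) * (deriv g y / y ^ n)) := by
    apply (hcs_div_pow hc (n+1)).mono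
    intro y hy h0
    apply hy
    simp only [Function.mem_support, ne_eq, not_not] at h0 ⊢
    simp [h0]
  have hM : IntegrableOn (fun y => (2/(k:ℝ)) * (g y / y ^ (n+1)) * (deriv g y / y ^ n))
      (Ioi (0:ℝ)) := (hMc.integrable_of_hasCompactSupport hMcs).integrableOn
  -- A = ∫ M
  have hAeq : (∫ y in Ioi (0:ℝ), (g y / y ^ (n+1)) ^ 2)
      = ∫ y in Ioi (0:ℝ), (2/(k:ℝ)) * (g y / y ^ (n+1)) * (deriv g y / y ^ n) := by
    have := MeasureTheory.integral_sub hP hM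
    rw [hint0] at this
    linarith [this]
  -- ∫ M ≤ ½ A + (2/k²) Q
  have hbound : (∫ y in Ioi (0:ℝ), (2/(k:ℝ)) * (g y / y ^ (n+1)) * (deriv g y / y ^ n))
      ≤ ∫ y in Ioi (0:ℝ),
        ((1/2) * (g y / y ^ (n+1)) ^ 2 + (2/(k:ℝ)^2) * (deriv g y / y ^ n) ^ 2) := by
    apply MeasureTheory.integral_mono hM
    · exact ((hP.const_mul _).add (hQ.const_mul _))
    · intro y
      simp only
      have h2k : 2/(k:ℝ) = 2*(1/(k:ℝ)) := by ring
      have h2k2 : 2/(k:ℝ)^2 = 2*(1/(k:ℝ))^2 := by ring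
      rw [h2k, h2k2]
      nlinarith [sq_nonneg (g y / y ^ (n+1) - 2*(1/(k:ℝ)) * (deriv g y / y ^ n))]
  rw [MeasureTheory.integral_add (hP.const_mul _) (hQ.const_mul _),
    MeasureTheory.integral_const_mul, MeasureTheory.integral_const_mul] at hbound
  rw [← hkR]
  have h4 : 4/(k:ℝ)^2 * (∫ y in Ioi (0:ℝ), (deriv g y / y ^ n) ^ 2)
      = 2*(2/(k:ℝ)^2 * ∫ y in Ioi (0:ℝ), (deriv g y / y ^ n) ^ 2) := by ring
  linarith [hAeq, hbound, h4]
end Stmt2Aux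

namespace Stmt2Aux

lemma hardy1 {g : ℝ → ℝ} (hg : ContDiff ℝ (⊤ : ℕ∞) g)
    (hc : HasCompactSupport g) (hs : tsupport g ⊆ Ioi 0) :
    ∫ y in Ioi (0:ℝ), (g y / y) ^ 2 ≤ 4 * ∫ y in Ioi (0:ℝ), (deriv g y) ^ 2 := by
  have := hardy_step 0 hg hc hs
  norm_num at this
  exact this

lemma contDiff_deriv' {g : ℝ → ℝ} (hg : ContDiff ℝ (⊤ : ℕ∞) g) :
    ContDiff ℝ (⊤ : ℕ∞) (deriv g) := by
  have : ContDiff ℝ (⊤ : ℕ∞) g ↔ Differentiable ℝ g ∧ ContDiff ℝ (⊤ : ℕ∞) (deriv g) :=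
    contDiff_infty_iff_deriv
  exact (this.mp hg).2

lemma tsupport_deriv_subset' {g : ℝ → ℝ} (hs : tsupport g ⊆ Ioi 0) :
    tsupport (deriv g) ⊆ Ioi 0 :=
  (closure_minimal support_deriv_subset (isClosed_tsupport g)).trans hs

lemma hardy2 {g : ℝ → ℝ} (hg : ContDiff ℝ (⊤ : ℕ∞) g)
    (hc : HasCompactSupport g) (hs : tsupport g ⊆ Ioi 0) :
    ∫ y in Ioi (0:ℝ), (g y / y ^ 2) ^ 2
      ≤ (16/9) * ∫ y in Ioi (0:ℝ), (deriv (deriv g) y) ^ 2 := by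
  have h1 := hardy_step 1 hg hc hs
  norm_num at h1
  have h2 := hardy1 (contDiff_deriv' hg) hc.deriv (tsupport_deriv_subset' hs)
  calc ∫ y in Ioi (0:ℝ), (g y / y ^ 2) ^ 2
      ≤ (4/9) * ∫ y in Ioi (0:ℝ), (deriv g y / y) ^ 2 := h1
    _ ≤ (4/9) * (4 * ∫ y in Ioi (0:ℝ), (deriv (deriv g) y) ^ 2) := by
        apply mul_le_mul_of_nonneg_left h2 (by norm_num)
    _ = (16/9) * ∫ y in Ioi (0:ℝ), (deriv (deriv g) y) ^ 2 := by ring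

end Stmt2Aux

namespace Stmt2Aux

variable {F : ℝ × ℝ → ℝ}

lemma restrict_prod_integrable {G : ℝ × ℝ → ℝ} (hG : Continuous G) (hc : HasCompactSupport G) :
    Integrable G (((volume : Measure ℝ).restrict (Ioi 0)).prod
      ((volume : Measure ℝ).restrict (Ioi 0))) := by
  rw [Measure.prod_restrict, ← Measure.volume_eq_prod]
  exact (hG.integrable_of_hasCompactSupport hc).restrict

lemma outer_integrable {G : ℝ × ℝ → ℝ} (hG : Continuous G) (hc : HasCompactSupport G) :
    Integrable (fun z => ∫ y in Ioi (0:ℝ), G (y, z))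
      ((volume : Measure ℝ).restrict (Ioi 0)) :=
  (restrict_prod_integrable hG hc).integral_prod_right

lemma tsupport_slice1_Ioi (hpos : ∀ p ∈ tsupport F, 0 < p.1) (z : ℝ) :
    tsupport (fun y => F (y, z)) ⊆ Ioi 0 :=
  fun y hy => hpos (y, z) (tsupport_slice1 z hy)

set_option maxHeartbeats 1000000 in
/-- 2D first-order Hardy inequality. -/
lemma hardy2D_1 (hF : ContDiff ℝ (⊤ : ℕ∞) F) (hc : HasCompactSupport F)
    (hpos : ∀ p ∈ tsupport F, 0 < p.1) :
    ∫ p in Ioi (0:ℝ) ×ˢ Ioi (0:ℝ), (F p / p.1) ^ 2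
      ≤ 4 * ∫ p in Ioi (0:ℝ) ×ˢ Ioi (0:ℝ), (deriv (fun t => F (t, p.2)) p.1) ^ 2 := by
  have hD : Differentiable ℝ F := hF.differentiable (by simp)
  have keyR : (fun p : ℝ × ℝ => (deriv (fun t => F (t, p.2)) p.1) ^ 2)
      = fun p : ℝ × ℝ => (fderiv ℝ F p (1, 0)) ^ 2 :=
    funext fun p => by rw [deriv_slice1 hD p.1 p.2]
  have hcontL : Continuous (fun p : ℝ × ℝ => (F p / p.1) ^ 2) := by
    have := cont2_div_pow hF.continuous hpos 1
    simp only [pow_one] at this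
    exact this.pow 2
  have hcsL : HasCompactSupport (fun p : ℝ × ℝ => (F p / p.1) ^ 2) := by
    apply hc.mono
    intro p hp
    simp only [Function.mem_support, ne_eq] at hp ⊢
    intro h0; apply hp; simp [h0]
  have hcontR : Continuous (fun p : ℝ × ℝ => (fderiv ℝ F p (1, 0)) ^ 2) :=
    ((contDiff_pderiv hF _).continuous).pow 2
  have hcsR : HasCompactSupport (fun p : ℝ × ℝ => (fderiv ℝ F p (1, 0)) ^ 2) := by
    apply (hcs_pderiv hc ((1:ℝ), (0:ℝ))).mono
    intro p hp
    simp only [Function.mem_support, ne_eq] at hp ⊢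
    intro h0; apply hp; rw [h0]; norm_num
  rw [keyR, fubini2 hcontL hcsL, fubini2 hcontR hcsR, ← MeasureTheory.integral_const_mul]
  apply MeasureTheory.integral_mono
      (outer_integrable (G := fun p : ℝ × ℝ => (F p / p.1) ^ 2) hcontL hcsL)
      ((outer_integrable (G := fun p : ℝ × ℝ => (fderiv ℝ F p (1, 0)) ^ 2)
        hcontR hcsR).const_mul 4)
  intro z
  simp only
  have hsl := hardy1 (contDiff_slice1 hF z) (hcs_slice1 hc z) (tsupport_slice1_Ioi hpos z)
  have e : (fun y => (deriv (fun t => F (t, z)) y) ^ 2)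
      = fun y => (fderiv ℝ F (y, z) (1, 0)) ^ 2 :=
    funext fun y => by rw [deriv_slice1 hD y z]
  rw [e] at hsl
  exact hsl

end Stmt2Aux

namespace Stmt2Aux

variable {F : ℝ × ℝ → ℝ}

lemma deriv2_slice (hF : ContDiff ℝ (⊤ : ℕ∞) F) (y z : ℝ) :
    deriv (deriv (fun s => F (s, z))) y
      = fderiv ℝ (fun q => fderiv ℝ F q (1, 0)) (y, z) (1, 0) := by
  have hD : Differentiable ℝ F := hF.differentiable (by simp)
  have h1 : deriv (fun s => F (s, z)) = fun t => fderiv ℝ F (t, z) (1, 0) :=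
    funext fun t => deriv_slice1 hD t z
  rw [h1]
  exact deriv_slice1 ((contDiff_pderiv hF _).differentiable (by simp)) y z

set_option maxHeartbeats 1000000 in
/-- 2D second-order Hardy inequality. -/
lemma hardy2D_2 (hF : ContDiff ℝ (⊤ : ℕ∞) F) (hc : HasCompactSupport F)
    (hpos : ∀ p ∈ tsupport F, 0 < p.1) :
    ∫ p in Ioi (0:ℝ) ×ˢ Ioi (0:ℝ), (F p / p.1 ^ 2) ^ 2
      ≤ (16/9) * ∫ p in Ioi (0:ℝ) ×ˢ Ioi (0:ℝ),
          (deriv (deriv (fun s => F (s, p.2))) p.1) ^ 2 := by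
  have keyR : (fun p : ℝ × ℝ => (deriv (deriv (fun s => F (s, p.2))) p.1) ^ 2)
      = fun p : ℝ × ℝ => (fderiv ℝ (fun q => fderiv ℝ F q (1, 0)) p (1, 0)) ^ 2 :=
    funext fun p => by rw [deriv2_slice hF p.1 p.2]
  have hcontL : Continuous (fun p : ℝ × ℝ => (F p / p.1 ^ 2) ^ 2) :=
    (cont2_div_pow hF.continuous hpos 2).pow 2
  have hcsL : HasCompactSupport (fun p : ℝ × ℝ => (F p / p.1 ^ 2) ^ 2) := by
    apply hc.mono
    intro p hp
    simp only [Function.mem_support, ne_eq] at hp ⊢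
    intro h0; apply hp; simp [h0]
  have hcontR : Continuous
      (fun p : ℝ × ℝ => (fderiv ℝ (fun q => fderiv ℝ F q (1, 0)) p (1, 0)) ^ 2) :=
    ((contDiff_pderiv (contDiff_pderiv hF ((1:ℝ), (0:ℝ))) ((1:ℝ), (0:ℝ))).continuous).pow 2
  have hcsR : HasCompactSupport
      (fun p : ℝ × ℝ => (fderiv ℝ (fun q => fderiv ℝ F q (1, 0)) p (1, 0)) ^ 2) := by
    apply (hcs_pderiv (hcs_pderiv hc ((1:ℝ), (0:ℝ))) ((1:ℝ), (0:ℝ))).mono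
    intro p hp
    simp only [Function.mem_support, ne_eq] at hp ⊢
    intro h0; apply hp; rw [h0]; norm_num
  rw [keyR, fubini2 hcontL hcsL, fubini2 hcontR hcsR, ← MeasureTheory.integral_const_mul]
  apply MeasureTheory.integral_mono
      (outer_integrable (G := fun p : ℝ × ℝ => (F p / p.1 ^ 2) ^ 2) hcontL hcsL)
      ((outer_integrable
        (G := fun p : ℝ × ℝ => (fderiv ℝ (fun q => fderiv ℝ F q (1, 0)) p (1, 0)) ^ 2)
        hcontR hcsR).const_mul _)
  intro z
  simp only
  have hsl := hardy2 (contDiff_slice1 hF z) (hcs_slice1 hc z) (tsupport_slice1_Ioi hpos z)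
  have e : (fun y => (deriv (deriv (fun s => F (s, z))) y) ^ 2)
      = fun y => (fderiv ℝ (fun q => fderiv ℝ F q (1, 0)) (y, z) (1, 0)) ^ 2 :=
    funext fun y => by rw [deriv2_slice hF y z]
  rw [e] at hsl
  exact hsl

end Stmt2Aux

namespace Stmt2Aux

variable {F : ℝ × ℝ → ℝ}

lemma hasDerivAt_slice1' (hD : Differentiable ℝ F) (p : ℝ × ℝ) :
    HasDerivAt (fun t => F (t, p.2)) (fderiv ℝ F p (1, 0)) p.1 :=
  hasDerivAt_slice1 hD p.1 p.2

lemma hasDerivAt_slice2' (hD : Differentiable ℝ F) (p : ℝ × ℝ) :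
    HasDerivAt (fun t => F (p.1, t)) (fderiv ℝ F p (0, 1)) p.2 :=
  hasDerivAt_slice2 hD p.1 p.2

lemma deriv_slice1' (hD : Differentiable ℝ F) (p : ℝ × ℝ) :
    deriv (fun t => F (t, p.2)) p.1 = fderiv ℝ F p (1, 0) :=
  deriv_slice1 hD p.1 p.2

lemma deriv_slice2' (hD : Differentiable ℝ F) (p : ℝ × ℝ) :
    deriv (fun t => F (p.1, t)) p.2 = fderiv ℝ F p (0, 1) :=
  deriv_slice2 hD p.1 p.2

lemma deriv2_slice' (hF : ContDiff ℝ (⊤ : ℕ∞) F) (p : ℝ × ℝ) :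
    deriv (deriv (fun s => F (s, p.2))) p.1
      = fderiv ℝ (fun q => fderiv ℝ F q (1, 0)) p (1, 0) :=
  deriv2_slice hF p.1 p.2

lemma hcs_mul_left {G H : ℝ × ℝ → ℝ} (hG : HasCompactSupport G) :
    HasCompactSupport (fun p => G p * H p) := by
  apply hG.mono
  intro p hp
  simp only [Function.mem_support, ne_eq] at hp ⊢
  intro h0; apply hp; simp [h0]

lemma hcs_mul_right {G H : ℝ × ℝ → ℝ} (hH : HasCompactSupport H) :
    HasCompactSupport (fun p => G p * H p) := by
  apply hH.mono
  intro p hp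
  simp only [Function.mem_support, ne_eq] at hp ⊢
  intro h0; apply hp; simp [h0]

lemma hcs_sq {G : ℝ × ℝ → ℝ} (hG : HasCompactSupport G) :
    HasCompactSupport (fun p => (G p) ^ 2) := by
  apply hG.mono
  intro p hp
  simp only [Function.mem_support, ne_eq] at hp ⊢
  intro h0; apply hp; simp [h0]

lemma integrableQ {G : ℝ × ℝ → ℝ} (hG : Continuous G) (hc : HasCompactSupport G) :
    IntegrableOn G (Ioi (0:ℝ) ×ˢ Ioi (0:ℝ)) :=
  (hG.integrable_of_hasCompactSupport hc).integrableOn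

end Stmt2Aux

/-- Partial derivative in `y` of a function of `(y,z)`. -/
def dy (f : ℝ → ℝ → ℝ) (y z : ℝ) : ℝ := deriv (fun t => f t z) y

/-- Second partial derivative in `y`. -/
def dyy (f : ℝ → ℝ → ℝ) (y z : ℝ) : ℝ := deriv (fun t => dy f t z) y

/-- Partial derivative in `z`. -/
def dz (f : ℝ → ℝ → ℝ) (y z : ℝ) : ℝ := deriv (fun t => f y t) z

/-- Integral over `Ω = (0,∞) × (0,∞)` (coordinates `(y,z)`, Lebesgue measure). -/
def II (f : ℝ → ℝ → ℝ) : ℝ := ∫ p in (Ioi (0:ℝ)) ×ˢ (Ioi (0:ℝ)), f p.1 p.2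

/-- `w` is smooth and compactly supported in `(0,∞) × [0,∞)`. -/
def IsTestW (w : ℝ → ℝ → ℝ) : Prop :=
  ContDiff ℝ (⊤ : ℕ∞) (fun p : ℝ × ℝ => w p.1 p.2) ∧
  HasCompactSupport (fun p : ℝ × ℝ => w p.1 p.2) ∧
  tsupport (fun p : ℝ × ℝ => w p.1 p.2) ⊆ Ioi 0 ×ˢ Ici 0

/-- `φ` is smooth and compactly supported in `(0,∞) × (0,∞)`. -/
def IsTestPhi (φ : ℝ → ℝ → ℝ) : Prop :=
  ContDiff ℝ (⊤ : ℕ∞) (fun p : ℝ × ℝ => φ p.1 p.2) ∧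
  HasCompactSupport (fun p : ℝ × ℝ => φ p.1 p.2) ∧
  tsupport (fun p : ℝ × ℝ => φ p.1 p.2) ⊆ Ioi 0 ×ˢ Ioi 0


section
open Stmt2Aux
set_option maxHeartbeats 2000000

/-- **Coercivity of the adjoint operator.**  There is a constant `C > 0` such that
for every test pair `ϖ = (w,φ)`,
`⟨L*ϖ, ϖ⟩ = ∫[−φ(∂_z w + z∂_y w) − (1/2)|∂_y²φ|²] + ∫[−w(∂_z φ + z∂_y φ) − (1/2)|∂_y w|²]
  ≤ −C ‖ϖ‖²_{E00}`. -/
theorem stmt2 :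
    ∃ C : ℝ, 0 < C ∧ ∀ w φ : ℝ → ℝ → ℝ, IsTestW w → IsTestPhi φ →
      II (fun y z => -φ y z * (dz w y z + z * dy w y z) - (1 / 2) * (dyy φ y z) ^ 2)
        + II (fun y z => -w y z * (dz φ y z + z * dy φ y z) - (1 / 2) * (dy w y z) ^ 2)
      ≤ -C * (II (fun y z => (dy w y z) ^ 2 + (w y z / y) ^ 2)
            + II (fun y z => (dyy φ y z) ^ 2 + (φ y z / y ^ 2) ^ 2)) := by
  refine ⟨1/10, by norm_num, ?_⟩
  intro w φ hw hφ
  obtain ⟨hwC, hwS, hwT⟩ := hw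
  obtain ⟨hpC, hpS, hpT⟩ := hφ
  set W : ℝ × ℝ → ℝ := fun p => w p.1 p.2 with hWdef
  set P : ℝ × ℝ → ℝ := fun p => φ p.1 p.2 with hPdef
  have Qmeas : MeasurableSet (Ioi (0:ℝ) ×ˢ Ioi (0:ℝ)) :=
    measurableSet_Ioi.prod measurableSet_Ioi
  have hWC : ContDiff ℝ (⊤ : ℕ∞) W := hwC.of_le (by simp)
  have hPC : ContDiff ℝ (⊤ : ℕ∞) P := hpC.of_le (by simp)
  have hWD : Differentiable ℝ W := hWC.differentiable (by simp)
  have hPD : Differentiable ℝ P := hPC.differentiable (by simp)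
  have hposW : ∀ p ∈ tsupport W, 0 < p.1 := fun p hp => (hwT hp).1
  have hposP : ∀ p ∈ tsupport P, 0 < p.1 := fun p hp => (hpT hp).1
  -- the product
  set R : ℝ × ℝ → ℝ := fun p => W p * P p with hRdef
  have hRC : ContDiff ℝ (⊤ : ℕ∞) R := hWC.mul hPC
  have hRS : HasCompactSupport R := hcs_mul_right hpS
  have hRT : tsupport R ⊆ Ioi 0 ×ˢ Ioi 0 := by
    refine subset_trans ?_ hpT
    refine closure_minimal ?_ (isClosed_tsupport P)
    intro p hp
    simp only [Function.mem_support, ne_eq, hRdef] at hp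
    apply subset_closure
    intro h0
    exact hp (by simp [h0])
  -- integrability of all pieces
  have cW := hWC.continuous
  have cP := hPC.continuous
  have cDzW := (contDiff_pderiv hWC ((0:ℝ),(1:ℝ))).continuous
  have cDyW := (contDiff_pderiv hWC ((1:ℝ),(0:ℝ))).continuous
  have cDzP := (contDiff_pderiv hPC ((0:ℝ),(1:ℝ))).continuous
  have cDyP := (contDiff_pderiv hPC ((1:ℝ),(0:ℝ))).continuous
  have cDyyP := (contDiff_pderiv (contDiff_pderiv hPC ((1:ℝ),(0:ℝ))) ((1:ℝ),(0:ℝ))).continuous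
  have ia : IntegrableOn (fun p : ℝ × ℝ => P p * fderiv ℝ W p (0, 1))
      (Ioi (0:ℝ) ×ˢ Ioi (0:ℝ)) := integrableQ (cP.mul cDzW) (hcs_mul_left hpS)
  have ib : IntegrableOn (fun p : ℝ × ℝ => p.2 * (P p * fderiv ℝ W p (1, 0)))
      (Ioi (0:ℝ) ×ˢ Ioi (0:ℝ)) :=
    integrableQ (continuous_snd.mul (cP.mul cDyW)) (hcs_mul_right (hcs_mul_left hpS))
  have ia' : IntegrableOn (fun p : ℝ × ℝ => W p * fderiv ℝ P p (0, 1))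
      (Ioi (0:ℝ) ×ˢ Ioi (0:ℝ)) := integrableQ (cW.mul cDzP) (hcs_mul_left hwS)
  have ib' : IntegrableOn (fun p : ℝ × ℝ => p.2 * (W p * fderiv ℝ P p (1, 0)))
      (Ioi (0:ℝ) ×ˢ Ioi (0:ℝ)) :=
    integrableQ (continuous_snd.mul (cW.mul cDyP)) (hcs_mul_right (hcs_mul_left hwS))
  have i5 : IntegrableOn
      (fun p : ℝ × ℝ => (fderiv ℝ (fun q => fderiv ℝ P q (1, 0)) p (1, 0)) ^ 2)
      (Ioi (0:ℝ) ×ˢ Ioi (0:ℝ)) :=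
    integrableQ (cDyyP.pow 2) (hcs_sq (hcs_pderiv (hcs_pderiv hpS _) _))
  have i6 : IntegrableOn (fun p : ℝ × ℝ => (fderiv ℝ W p (1, 0)) ^ 2)
      (Ioi (0:ℝ) ×ˢ Ioi (0:ℝ)) := integrableQ (cDyW.pow 2) (hcs_sq (hcs_pderiv hwS _))
  have c7 : Continuous (fun p : ℝ × ℝ => (W p / p.1) ^ 2) := by
    have := cont2_div_pow cW hposW 1
    simp only [pow_one] at this
    exact this.pow 2
  have i7 : IntegrableOn (fun p : ℝ × ℝ => (W p / p.1) ^ 2)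
      (Ioi (0:ℝ) ×ˢ Ioi (0:ℝ)) := by
    refine integrableQ c7 ?_
    apply hwS.mono
    intro p hp
    simp only [Function.mem_support, ne_eq] at hp ⊢
    intro h0; apply hp; simp [h0]
  have i8 : IntegrableOn (fun p : ℝ × ℝ => (P p / p.1 ^ 2) ^ 2)
      (Ioi (0:ℝ) ×ˢ Ioi (0:ℝ)) := by
    refine integrableQ ((cont2_div_pow cP hposP 2).pow 2) ?_
    apply hpS.mono
    intro p hp
    simp only [Function.mem_support, ne_eq] at hp ⊢
    intro h0; apply hp; simp [h0]
  -- rewrite the four `II`'s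
  have p1 : (fun p : ℝ × ℝ =>
        -φ p.1 p.2 * (dz w p.1 p.2 + p.2 * dy w p.1 p.2) - (1 / 2) * (dyy φ p.1 p.2) ^ 2)
      = (fun p : ℝ × ℝ => -(P p * fderiv ℝ W p (0, 1)) - p.2 * (P p * fderiv ℝ W p (1, 0))
          - (1 / 2) * (fderiv ℝ (fun q => fderiv ℝ P q (1, 0)) p (1, 0)) ^ 2) := by
    funext p
    rw [show dz w p.1 p.2 = fderiv ℝ W p (0, 1) from deriv_slice2' hWD p,
      show dy w p.1 p.2 = fderiv ℝ W p (1, 0) from deriv_slice1' hWD p,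
      show dyy φ p.1 p.2 = fderiv ℝ (fun q => fderiv ℝ P q (1, 0)) p (1, 0) from
        deriv2_slice' hPC p]
    ring
  have p2 : (fun p : ℝ × ℝ =>
        -w p.1 p.2 * (dz φ p.1 p.2 + p.2 * dy φ p.1 p.2) - (1 / 2) * (dy w p.1 p.2) ^ 2)
      = (fun p : ℝ × ℝ => -(W p * fderiv ℝ P p (0, 1)) - p.2 * (W p * fderiv ℝ P p (1, 0))
          - (1 / 2) * (fderiv ℝ W p (1, 0)) ^ 2) := by
    funext p
    rw [show dz φ p.1 p.2 = fderiv ℝ P p (0, 1) from deriv_slice2' hPD p,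
      show dy φ p.1 p.2 = fderiv ℝ P p (1, 0) from deriv_slice1' hPD p,
      show dy w p.1 p.2 = fderiv ℝ W p (1, 0) from deriv_slice1' hWD p]
    ring
  have p3 : (fun p : ℝ × ℝ => (dy w p.1 p.2) ^ 2 + (w p.1 p.2 / p.1) ^ 2)
      = (fun p : ℝ × ℝ => (fderiv ℝ W p (1, 0)) ^ 2 + (W p / p.1) ^ 2) := by
    funext p
    rw [show dy w p.1 p.2 = fderiv ℝ W p (1, 0) from deriv_slice1' hWD p]
  have p4 : (fun p : ℝ × ℝ => (dyy φ p.1 p.2) ^ 2 + (φ p.1 p.2 / p.1 ^ 2) ^ 2)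
      = (fun p : ℝ × ℝ => (fderiv ℝ (fun q => fderiv ℝ P q (1, 0)) p (1, 0)) ^ 2
          + (P p / p.1 ^ 2) ^ 2) := by
    funext p
    rw [show dyy φ p.1 p.2 = fderiv ℝ (fun q => fderiv ℝ P q (1, 0)) p (1, 0) from
      deriv2_slice' hPC p]
  have e1 : II (fun y z => -φ y z * (dz w y z + z * dy w y z) - (1 / 2) * (dyy φ y z) ^ 2)
      = -(∫ p in Ioi (0:ℝ) ×ˢ Ioi (0:ℝ), P p * fderiv ℝ W p (0, 1))
        - (∫ p in Ioi (0:ℝ) ×ˢ Ioi (0:ℝ), p.2 * (P p * fderiv ℝ W p (1, 0)))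
        - (1 / 2) * ∫ p in Ioi (0:ℝ) ×ˢ Ioi (0:ℝ),
            (fderiv ℝ (fun q => fderiv ℝ P q (1, 0)) p (1, 0)) ^ 2 := by
    have h0 : II (fun y z => -φ y z * (dz w y z + z * dy w y z) - (1 / 2) * (dyy φ y z) ^ 2)
        = ∫ p in Ioi (0:ℝ) ×ˢ Ioi (0:ℝ),
            (-(P p * fderiv ℝ W p (0, 1)) - p.2 * (P p * fderiv ℝ W p (1, 0))
              - (1 / 2) * (fderiv ℝ (fun q => fderiv ℝ P q (1, 0)) p (1, 0)) ^ 2) :=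
      congrArg (fun G : ℝ × ℝ → ℝ => ∫ p in Ioi (0:ℝ) ×ˢ Ioi (0:ℝ), G p) p1
    have hF1 : IntegrableOn (fun p : ℝ × ℝ =>
        -(P p * fderiv ℝ W p (0, 1)) - p.2 * (P p * fderiv ℝ W p (1, 0)))
        (Ioi (0:ℝ) ×ˢ Ioi (0:ℝ)) := (ia.neg).sub ib
    have hG1 : IntegrableOn (fun p : ℝ × ℝ =>
        (1:ℝ) / 2 * (fderiv ℝ (fun q => fderiv ℝ P q (1, 0)) p (1, 0)) ^ 2)
        (Ioi (0:ℝ) ×ˢ Ioi (0:ℝ)) := i5.const_mul _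
    have hN1 : IntegrableOn (fun p : ℝ × ℝ => -(P p * fderiv ℝ W p (0, 1)))
        (Ioi (0:ℝ) ×ˢ Ioi (0:ℝ)) := ia.neg
    rw [h0, MeasureTheory.integral_sub hF1 hG1,
      MeasureTheory.integral_sub hN1 ib, MeasureTheory.integral_neg,
      MeasureTheory.integral_const_mul]
  have e2 : II (fun y z => -w y z * (dz φ y z + z * dy φ y z) - (1 / 2) * (dy w y z) ^ 2)
      = -(∫ p in Ioi (0:ℝ) ×ˢ Ioi (0:ℝ), W p * fderiv ℝ P p (0, 1))
        - (∫ p in Ioi (0:ℝ) ×ˢ Ioi (0:ℝ), p.2 * (W p * fderiv ℝ P p (1, 0)))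
        - (1 / 2) * ∫ p in Ioi (0:ℝ) ×ˢ Ioi (0:ℝ), (fderiv ℝ W p (1, 0)) ^ 2 := by
    have h0 : II (fun y z => -w y z * (dz φ y z + z * dy φ y z) - (1 / 2) * (dy w y z) ^ 2)
        = ∫ p in Ioi (0:ℝ) ×ˢ Ioi (0:ℝ),
            (-(W p * fderiv ℝ P p (0, 1)) - p.2 * (W p * fderiv ℝ P p (1, 0))
              - (1 / 2) * (fderiv ℝ W p (1, 0)) ^ 2) :=
      congrArg (fun G : ℝ × ℝ → ℝ => ∫ p in Ioi (0:ℝ) ×ˢ Ioi (0:ℝ), G p) p2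
    have hF2 : IntegrableOn (fun p : ℝ × ℝ =>
        -(W p * fderiv ℝ P p (0, 1)) - p.2 * (W p * fderiv ℝ P p (1, 0)))
        (Ioi (0:ℝ) ×ˢ Ioi (0:ℝ)) := (ia'.neg).sub ib'
    have hG2 : IntegrableOn (fun p : ℝ × ℝ => (1:ℝ) / 2 * (fderiv ℝ W p (1, 0)) ^ 2)
        (Ioi (0:ℝ) ×ˢ Ioi (0:ℝ)) := i6.const_mul _
    have hN2 : IntegrableOn (fun p : ℝ × ℝ => -(W p * fderiv ℝ P p (0, 1)))
        (Ioi (0:ℝ) ×ˢ Ioi (0:ℝ)) := ia'.neg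
    rw [h0, MeasureTheory.integral_sub hF2 hG2,
      MeasureTheory.integral_sub hN2 ib', MeasureTheory.integral_neg,
      MeasureTheory.integral_const_mul]
  have e3 : II (fun y z => (dy w y z) ^ 2 + (w y z / y) ^ 2)
      = (∫ p in Ioi (0:ℝ) ×ˢ Ioi (0:ℝ), (fderiv ℝ W p (1, 0)) ^ 2)
        + ∫ p in Ioi (0:ℝ) ×ˢ Ioi (0:ℝ), (W p / p.1) ^ 2 := by
    have h0 : II (fun y z => (dy w y z) ^ 2 + (w y z / y) ^ 2)
        = ∫ p in Ioi (0:ℝ) ×ˢ Ioi (0:ℝ),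
            ((fderiv ℝ W p (1, 0)) ^ 2 + (W p / p.1) ^ 2) :=
      congrArg (fun G : ℝ × ℝ → ℝ => ∫ p in Ioi (0:ℝ) ×ˢ Ioi (0:ℝ), G p) p3
    rw [h0, MeasureTheory.integral_add i6 i7]
  have e4 : II (fun y z => (dyy φ y z) ^ 2 + (φ y z / y ^ 2) ^ 2)
      = (∫ p in Ioi (0:ℝ) ×ˢ Ioi (0:ℝ),
            (fderiv ℝ (fun q => fderiv ℝ P q (1, 0)) p (1, 0)) ^ 2)
        + ∫ p in Ioi (0:ℝ) ×ˢ Ioi (0:ℝ), (P p / p.1 ^ 2) ^ 2 := by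
    have h0 : II (fun y z => (dyy φ y z) ^ 2 + (φ y z / y ^ 2) ^ 2)
        = ∫ p in Ioi (0:ℝ) ×ˢ Ioi (0:ℝ),
            ((fderiv ℝ (fun q => fderiv ℝ P q (1, 0)) p (1, 0)) ^ 2 + (P p / p.1 ^ 2) ^ 2) :=
      congrArg (fun G : ℝ × ℝ → ℝ => ∫ p in Ioi (0:ℝ) ×ˢ Ioi (0:ℝ), G p) p4
    rw [h0, MeasureTheory.integral_add i5 i8]
  -- cross terms vanish
  have cz : (∫ p in Ioi (0:ℝ) ×ˢ Ioi (0:ℝ), P p * fderiv ℝ W p (0, 1))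
      + (∫ p in Ioi (0:ℝ) ×ˢ Ioi (0:ℝ), W p * fderiv ℝ P p (0, 1)) = 0 := by
    rw [← MeasureTheory.integral_add ia ia']
    refine Eq.trans (setIntegral_congr_fun Qmeas (fun p _ => ?_)) (div2_zero hRC hRS hRT)
    rw [show deriv (fun t => R (p.1, t)) p.2
        = fderiv ℝ W p (0, 1) * P p + W p * fderiv ℝ P p (0, 1) from
      ((hasDerivAt_slice2' hWD p).mul (hasDerivAt_slice2' hPD p)).deriv]
    ring
  have cy : (∫ p in Ioi (0:ℝ) ×ˢ Ioi (0:ℝ), p.2 * (P p * fderiv ℝ W p (1, 0)))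
      + (∫ p in Ioi (0:ℝ) ×ˢ Ioi (0:ℝ), p.2 * (W p * fderiv ℝ P p (1, 0))) = 0 := by
    rw [← MeasureTheory.integral_add ib ib']
    refine Eq.trans (setIntegral_congr_fun Qmeas (fun p _ => ?_)) (div1_zero hRC hRS hRT)
    rw [show deriv (fun t => R (t, p.2)) p.1
        = fderiv ℝ W p (1, 0) * P p + W p * fderiv ℝ P p (1, 0) from
      ((hasDerivAt_slice1' hWD p).mul (hasDerivAt_slice1' hPD p)).deriv]
    ring
  -- Hardy inequalities
  have hh1 : (∫ p in Ioi (0:ℝ) ×ˢ Ioi (0:ℝ), (W p / p.1) ^ 2)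
      ≤ 4 * ∫ p in Ioi (0:ℝ) ×ˢ Ioi (0:ℝ), (fderiv ℝ W p (1, 0)) ^ 2 := by
    have h := hardy2D_1 hWC hwS hposW
    have e : (fun p : ℝ × ℝ => (deriv (fun t => W (t, p.2)) p.1) ^ 2)
        = fun p : ℝ × ℝ => (fderiv ℝ W p (1, 0)) ^ 2 :=
      funext fun p => by rw [deriv_slice1' hWD p]
    rwa [e] at h
  have hh2 : (∫ p in Ioi (0:ℝ) ×ˢ Ioi (0:ℝ), (P p / p.1 ^ 2) ^ 2)
      ≤ (16/9) * ∫ p in Ioi (0:ℝ) ×ˢ Ioi (0:ℝ),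
          (fderiv ℝ (fun q => fderiv ℝ P q (1, 0)) p (1, 0)) ^ 2 := by
    have h := hardy2D_2 hPC hpS hposP
    have e : (fun p : ℝ × ℝ => (deriv (deriv (fun s => P (s, p.2))) p.1) ^ 2)
        = fun p : ℝ × ℝ => (fderiv ℝ (fun q => fderiv ℝ P q (1, 0)) p (1, 0)) ^ 2 :=
      funext fun p => by rw [deriv2_slice' hPC p]
    rwa [e] at h
  -- nonnegativity
  have hA : 0 ≤ ∫ p in Ioi (0:ℝ) ×ˢ Ioi (0:ℝ), (fderiv ℝ W p (1, 0)) ^ 2 :=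
    setIntegral_nonneg Qmeas (fun p _ => sq_nonneg _)
  have hB : 0 ≤ ∫ p in Ioi (0:ℝ) ×ˢ Ioi (0:ℝ),
      (fderiv ℝ (fun q => fderiv ℝ P q (1, 0)) p (1, 0)) ^ 2 :=
    setIntegral_nonneg Qmeas (fun p _ => sq_nonneg _)
  rw [e1, e2, e3, e4]
  linarith [cz, cy, hh1, hh2, hA, hB]

end
end
end

section
/- Fix ξ ∈ ℝ with ξ ≠ 0 and H ≥ 0. Let a, b : [H,∞) → ℂ be differentiable functions satisfying a'(z) + i z ξ a(z) = ξ⁴ b(z) and b'(z) + i z ξ b(z) = ξ² a(z) for all z ≥ H. If ∫_H^∞ |a(z) + |ξ| b(z)|² dz < ∞, then a(z) + |ξ| b(z) = 0 for all z ≥ H. -/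
open Set MeasureTheory

/-!
The combination `w = a + |ξ| b` solves the scalar equation `w' = (|ξ|³ - i z ξ) w`, whose
coefficient has nonnegative real part. Hence `(‖w‖²)' = 2 |ξ|³ ‖w‖² ≥ 0`, so `‖w‖²` is
nondecreasing on `[H, ∞)`. A nondecreasing function integrable on `(z, ∞)` cannot be positive
at `z`, so `w z = 0` for every `z ≥ H`.
-/

lemma Complex.real_inner_mul_self (g w : ℂ) : inner ℝ w (g * w) = g.re * ‖w‖ ^ 2 := by
  rw [Complex.inner, mul_assoc, Complex.mul_conj', ← Complex.ofReal_pow, Complex.re_mul_ofReal]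

lemma monotoneOn_norm_sq_of_hasDerivWithinAt_mul {D : Set ℝ} (hD : Convex ℝ D) {w g : ℝ → ℂ}
    (hw : ∀ z ∈ D, HasDerivWithinAt w (g z * w z) D z) (hg : ∀ z ∈ D, 0 ≤ (g z).re) :
    MonotoneOn (fun z => ‖w z‖ ^ 2) D := by
  refine monotoneOn_of_hasDerivWithinAt_nonneg hD
    (fun z hz => (hw z hz).norm_sq.continuousWithinAt)
    (fun z hz => ((hw z (interior_subset hz)).norm_sq).mono interior_subset) fun z hz => ?_
  rw [Complex.real_inner_mul_self]
  have := hg z (interior_subset hz)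
  positivity

lemma MonotoneOn.nonpos_of_integrableOn_Ioi {f : ℝ → ℝ} {H : ℝ} (hf : MonotoneOn f (Ici H))
    (hint : IntegrableOn f (Ioi H)) {z : ℝ} (hz : z ∈ Ici H) : f z ≤ 0 := by
  by_contra! hpos
  have hconst : IntegrableOn (fun _ => f z) (Ioi z) := by
    refine (hint.mono_set (Ioi_subset_Ioi hz)).mono' aestronglyMeasurable_const ?_
    refine (ae_restrict_iff' measurableSet_Ioi).mpr (ae_of_all _ fun t ht => ?_)
    rw [Real.norm_of_nonneg hpos.le]
    exact hf hz (mem_Ici.mpr (hz.out.trans ht.le)) ht.le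
  rw [integrableOn_const_iff, Real.volume_Ioi] at hconst
  simp [hpos.ne'] at hconst

lemma hasDerivWithinAt_add_abs_mul {ξ : ℝ} {s : Set ℝ} {a b : ℝ → ℂ} {z : ℝ}
    (ha : HasDerivWithinAt a ((ξ : ℂ) ^ 4 * b z - Complex.I * z * ξ * a z) s z)
    (hb : HasDerivWithinAt b ((ξ : ℂ) ^ 2 * a z - Complex.I * z * ξ * b z) s z) :
    HasDerivWithinAt (fun z => a z + ((|ξ| : ℝ) : ℂ) * b z)
      ((((|ξ| ^ 3 : ℝ) : ℂ) - Complex.I * z * ξ) * (a z + ((|ξ| : ℝ) : ℂ) * b z)) s z := by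
  have habs : ((|ξ| : ℝ) : ℂ) ^ 2 = (ξ : ℂ) ^ 2 := by exact_mod_cast sq_abs ξ
  refine (ha.add (hb.const_mul ((|ξ| : ℝ) : ℂ))).congr_deriv ?_
  push_cast
  linear_combination (-((|ξ| : ℝ) : ℂ) * a z - (((|ξ| : ℝ) : ℂ) ^ 2 + (ξ : ℂ) ^ 2) * b z) * habs

theorem stmt15_general (ξ : ℝ) (H : ℝ) (a b : ℝ → ℂ)
    (ha : ∀ z ∈ Ici H,
      HasDerivWithinAt a ((ξ : ℂ) ^ 4 * b z - Complex.I * z * ξ * a z) (Ici H) z)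
    (hb : ∀ z ∈ Ici H,
      HasDerivWithinAt b ((ξ : ℂ) ^ 2 * a z - Complex.I * z * ξ * b z) (Ici H) z)
    (hint : IntegrableOn (fun z : ℝ => ‖a z + ((|ξ| : ℝ) : ℂ) * b z‖ ^ 2) (Ioi H)) :
    ∀ z ∈ Ici H, a z + ((|ξ| : ℝ) : ℂ) * b z = 0 := by
  have hmono := monotoneOn_norm_sq_of_hasDerivWithinAt_mul (convex_Ici H)
    (fun z hz => hasDerivWithinAt_add_abs_mul (ha z hz) (hb z hz))
    (fun z _ => by simp [-Complex.ofReal_pow])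
  intro z hz
  have hnonpos := hmono.nonpos_of_integrableOn_Ioi hint hz
  simpa using le_antisymm hnonpos (sq_nonneg _)

/-- **Transparent boundary condition for the Fourier modes.**
Fix `ξ ≠ 0` and `H ≥ 0`.  If `a, b : [H,∞) → ℂ` are differentiable with
`a' + izξ a = ξ⁴ b` and `b' + izξ b = ξ² a`, and if the combination
`w₊ = a + |ξ| b` is square-integrable on `(H,∞)`, then `a + |ξ| b ≡ 0` on `[H,∞)`. -/
theorem stmt15 (ξ : ℝ) (hξ : ξ ≠ 0) (H : ℝ) (hH : 0 ≤ H) (a b : ℝ → ℂ)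
    (ha : ∀ z ∈ Ici H,
      HasDerivWithinAt a ((ξ : ℂ) ^ 4 * b z - Complex.I * z * ξ * a z) (Ici H) z)
    (hb : ∀ z ∈ Ici H,
      HasDerivWithinAt b ((ξ : ℂ) ^ 2 * a z - Complex.I * z * ξ * b z) (Ici H) z)
    (hint : IntegrableOn (fun z : ℝ => ‖a z + ((|ξ| : ℝ) : ℂ) * b z‖ ^ 2) (Ioi H)) :
    ∀ z ∈ Ici H, a z + ((|ξ| : ℝ) : ℂ) * b z = 0 :=
  stmt15_general ξ H a b ha hb hint
end
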